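/- Let M →f E →g N →δ M⟦1⟧ be a distinguished triangle in C with δ ≠ 0 (non-split). Then dim_k Hom(E, N⟦1⟧) + dim_k Hom(E, M⟦1⟧) < dim_k Hom(M ⊕ N, (M ⊕ N)⟦1⟧), where the right-hand side equals dim_k Hom(N, N⟦1⟧) + dim_k Hom(M, N⟦1⟧) + dim_k Hom(N, M⟦1⟧) + dim_k Hom(M, M⟦1⟧). (No Ext¹-symmetry hypothesis is needed for this inequality.) -/

import Mathlib

/-!
Applying `Hom(-, X)` to the triangle gives an exact sequence
`Hom(N, X) → Hom(E, X) → Hom(M, X)`, so `dim Hom(E, X) ≤ dim Hom(N, X) + dim Hom(M, X)`,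
with a defect of at least `dim ker (Hom(N, X) → Hom(E, X))`. For `X = M⟦1⟧` this kernel
contains `δ ≠ 0`, which makes the inequality strict. Hom-spaces out of and into a biproduct
split as direct sums, and the shift preserves biproducts.
-/

open CategoryTheory CategoryTheory.Limits CategoryTheory.Pretriangulated Module

lemma LinearMap.finrank_add_finrank_ker_le_of_exact {K A B D : Type*} [Field K]
    [AddCommGroup A] [Module K A] [AddCommGroup B] [Module K B] [AddCommGroup D] [Module K D]
    [FiniteDimensional K A] [FiniteDimensional K B] [FiniteDimensional K D]
    {G : A →ₗ[K] B} {F : B →ₗ[K] D} (h : Function.Exact G F) :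
    finrank K B + finrank K (ker G) ≤ finrank K A + finrank K D := by
  have hG := finrank_range_add_finrank_ker G
  have hF := finrank_range_add_finrank_ker F
  have hrange : finrank K (range F) ≤ finrank K D := Submodule.finrank_le _
  rw [h.linearMap_ker_eq] at hF
  omega

namespace CategoryTheory

variable {k : Type*} [Field k] {C : Type*} [Category C] [Preadditive C] [Linear k C]

section Biprod

variable [HasBinaryBiproducts C]

noncomputable def biprod.descLinearEquiv (M N Z : C) :
    ((M ⊞ N) ⟶ Z) ≃ₗ[k] (M ⟶ Z) × (N ⟶ Z) where
  toFun h := (biprod.inl ≫ h, biprod.inr ≫ h)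
  map_add' x y := by simp [Preadditive.comp_add]
  map_smul' c x := by simp [Linear.comp_smul]
  invFun p := biprod.desc p.1 p.2
  left_inv h := by cat_disch
  right_inv p := by simp

noncomputable def biprod.liftLinearEquiv (X M N : C) :
    (X ⟶ (M ⊞ N)) ≃ₗ[k] (X ⟶ M) × (X ⟶ N) where
  toFun h := (h ≫ biprod.fst, h ≫ biprod.snd)
  map_add' x y := by simp [Preadditive.add_comp]
  map_smul' c x := by simp [Linear.smul_comp]
  invFun p := biprod.lift p.1 p.2
  left_inv h := by cat_disch
  right_inv p := by simp

variable [∀ X Y : C, FiniteDimensional k (X ⟶ Y)]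

lemma finrank_biprod_hom (M N Z : C) :
    finrank k ((M ⊞ N) ⟶ Z) = finrank k (M ⟶ Z) + finrank k (N ⟶ Z) := by
  rw [(biprod.descLinearEquiv M N Z).finrank_eq, finrank_prod]

lemma finrank_hom_biprod (X M N : C) :
    finrank k (X ⟶ (M ⊞ N)) = finrank k (X ⟶ M) + finrank k (X ⟶ N) := by
  rw [(biprod.liftLinearEquiv X M N).finrank_eq, finrank_prod]

lemma finrank_hom_map_biprod {D : Type*} [Category D] [Preadditive D] [HasBinaryBiproducts D]
    (F : D ⥤ C) [F.Additive] (X : C) (M N : D) :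
    finrank k (X ⟶ F.obj (M ⊞ N)) = finrank k (X ⟶ F.obj M) + finrank k (X ⟶ F.obj N) := by
  have : PreservesBinaryBiproduct M N F := preservesBinaryBiproduct_of_preservesBiproduct _ _ _
  rw [(Linear.homCongr k (Iso.refl X) (F.mapBiprod M N)).finrank_eq, finrank_hom_biprod]

end Biprod

variable [HasZeroObject C] [HasShift C ℤ] [∀ n : ℤ, (shiftFunctor C n).Additive]
  [Pretriangulated C]

namespace Pretriangulated

lemma exact_leftComp_of_distTriang {T : Triangle C} (hT : T ∈ distTriang C) (X : C) :
    Function.Exact (Linear.leftComp k X T.mor₂) (Linear.leftComp k X T.mor₁) := by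
  intro x
  constructor
  · intro hx
    obtain ⟨y, hy⟩ := Triangle.yoneda_exact₂ T hT x hx
    exact ⟨y, hy.symm⟩
  · rintro ⟨y, rfl⟩
    simp [Linear.leftComp, ← Category.assoc, comp_distTriang_mor_zero₁₂ T hT]

variable [∀ X Y : C, FiniteDimensional k (X ⟶ Y)]

lemma finrank_hom_obj₂_add_finrank_ker_le {T : Triangle C} (hT : T ∈ distTriang C) (X : C) :
    finrank k (T.obj₂ ⟶ X) + finrank k (LinearMap.ker (Linear.leftComp k X T.mor₂)) ≤
      finrank k (T.obj₃ ⟶ X) + finrank k (T.obj₁ ⟶ X) :=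
  LinearMap.finrank_add_finrank_ker_le_of_exact (exact_leftComp_of_distTriang hT X)

lemma finrank_hom_obj₂_le {T : Triangle C} (hT : T ∈ distTriang C) (X : C) :
    finrank k (T.obj₂ ⟶ X) ≤ finrank k (T.obj₃ ⟶ X) + finrank k (T.obj₁ ⟶ X) :=
  (Nat.le_add_right _ _).trans (finrank_hom_obj₂_add_finrank_ker_le hT X)

lemma finrank_hom_obj₂_lt {T : Triangle C} (hT : T ∈ distTriang C) {X : C}
    {d : T.obj₃ ⟶ X} (hd : d ≠ 0) (hd₂ : T.mor₂ ≫ d = 0) :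
    finrank k (T.obj₂ ⟶ X) < finrank k (T.obj₃ ⟶ X) + finrank k (T.obj₁ ⟶ X) := by
  have hker : LinearMap.ker (Linear.leftComp k X T.mor₂) ≠ ⊥ :=
    (Submodule.ne_bot_iff _).2 ⟨d, hd₂, hd⟩
  have := Submodule.one_le_finrank_iff.2 hker
  have := finrank_hom_obj₂_add_finrank_ker_le (k := k) hT X
  omega

end Pretriangulated

end CategoryTheory

/-- Let `k` be a field and `C` a `k`-linear pretriangulated category
with binary biproducts whose Hom-spaces are finite dimensional over `k`.
If `M ⟶ E ⟶ N ⟶ M⟦1⟧` is a non-split distinguished triangle (`δ ≠ 0`), then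
`dim Ext¹(E, N) + dim Ext¹(E, M) < dim Ext¹(M ⊕ N, M ⊕ N)`, where the right-hand
side equals `dim Ext¹(N,N) + dim Ext¹(M,N) + dim Ext¹(N,M) + dim Ext¹(M,M)`. -/
theorem stmt5 {k : Type*} [Field k]
    {C : Type*} [Category C] [Preadditive C] [Linear k C]
    [HasZeroObject C] [HasShift C ℤ]
    [∀ n : ℤ, (shiftFunctor C n).Additive] [Pretriangulated C]
    [HasBinaryBiproducts C]
    [∀ X Y : C, FiniteDimensional k (X ⟶ Y)]
    (M E N : C) (f : M ⟶ E) (g : E ⟶ N) (δ : N ⟶ M⟦(1 : ℤ)⟧)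
    (hT : Triangle.mk f g δ ∈ distTriang C) (hδ : δ ≠ 0) :
    (finrank k (E ⟶ N⟦(1 : ℤ)⟧) + finrank k (E ⟶ M⟦(1 : ℤ)⟧) <
        finrank k ((M ⊞ N) ⟶ (M ⊞ N)⟦(1 : ℤ)⟧)) ∧
      finrank k ((M ⊞ N) ⟶ (M ⊞ N)⟦(1 : ℤ)⟧) =
        finrank k (N ⟶ N⟦(1 : ℤ)⟧) + finrank k (M ⟶ N⟦(1 : ℤ)⟧) +
          finrank k (N ⟶ M⟦(1 : ℤ)⟧) + finrank k (M ⟶ M⟦(1 : ℤ)⟧) := by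
  have hsplit : finrank k ((M ⊞ N) ⟶ (M ⊞ N)⟦(1 : ℤ)⟧) =
      finrank k (N ⟶ N⟦(1 : ℤ)⟧) + finrank k (M ⟶ N⟦(1 : ℤ)⟧) +
        finrank k (N ⟶ M⟦(1 : ℤ)⟧) + finrank k (M ⟶ M⟦(1 : ℤ)⟧) := by
    rw [finrank_biprod_hom, finrank_hom_map_biprod, finrank_hom_map_biprod]
    omega
  have hN : finrank k (E ⟶ N⟦(1 : ℤ)⟧) ≤
      finrank k (N ⟶ N⟦(1 : ℤ)⟧) + finrank k (M ⟶ N⟦(1 : ℤ)⟧) :=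
    finrank_hom_obj₂_le hT _
  have hM : finrank k (E ⟶ M⟦(1 : ℤ)⟧) <
      finrank k (N ⟶ M⟦(1 : ℤ)⟧) + finrank k (M ⟶ M⟦(1 : ℤ)⟧) :=
    finrank_hom_obj₂_lt hT hδ (comp_distTriang_mor_zero₂₃ _ hT)
  exact ⟨by omega, hsplit⟩
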